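/- arXiv:2603.22801 — 6 statements merged into one kernel-verified Lean document; each statement's English description precedes it below -/
import Mathlib

section
/- Let x₁ ~ N(0, a) and x₂ ~ N(0, b) be independent Gaussian random variables with a, b > 0, and let σ be the ReLU function. Then E[x₁·σ(x₁+x₂)·σ'(x₁+x₂)] = a/2. -/
/-!
The law of `(x₁, x₂)` is invariant under `p ↦ -p`. Writing `max t 0 = (t + |t|) / 2`, the integrand
splits as `x₁ (x₁ + x₂) / 2 + x₁ |x₁ + x₂| / 2`; the second term is odd, so it integrates to `0`,
and the first one integrates to `(E[x₁²] + E[x₁] E[x₂]) / 2 = a / 2`.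
-/

open MeasureTheory ProbabilityTheory
open scoped NNReal

namespace MeasureTheory.Measure

instance isNegInvariant_prod {α β : Type*} [MeasurableSpace α] [MeasurableSpace β] [Neg α] [Neg β]
    [MeasurableNeg α] [MeasurableNeg β] (μ : Measure α) (ν : Measure β) [SFinite μ] [SFinite ν]
    [μ.IsNegInvariant] [ν.IsNegInvariant] : (μ.prod ν).IsNegInvariant := by
  constructor
  have h := map_prod_map μ ν measurable_neg measurable_neg
  rw [map_neg_eq_self, map_neg_eq_self] at h
  exact h.symm

end MeasureTheory.Measure

namespace ProbabilityTheory

instance isNegInvariant_gaussianReal_zero (v : ℝ≥0) : (gaussianReal 0 v).IsNegInvariant :=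
  ⟨by simpa [Measure.neg_def] using gaussianReal_map_neg (μ := 0) (v := v)⟩

lemma integral_sq_gaussianReal_zero (v : ℝ≥0) : ∫ x, x ^ 2 ∂gaussianReal 0 v = v := by
  rw [← variance_of_integral_eq_zero aemeasurable_id' integral_id_gaussianReal,
    variance_fun_id_gaussianReal]

end ProbabilityTheory

section OddFunctions

variable {G : Type*} [MeasurableSpace G] [AddGroup G] [MeasurableNeg G] {μ : Measure G}
  [μ.IsNegInvariant]

lemma integral_eq_zero_of_odd {E : Type*} [NormedAddCommGroup E] [NormedSpace ℝ E] {f : G → E}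
    (hf : ∀ x, f (-x) = -f x) : ∫ x, f x ∂μ = 0 := by
  have h : ∫ x, f x ∂μ = -∫ x, f x ∂μ := by
    rw [← integral_neg, ← integral_neg_eq_self f μ]
    simp_rw [hf]
  have h_two : (2 : ℝ) • ∫ x, f x ∂μ = 0 := by
    rw [two_smul]
    nth_rewrite 2 [h]
    exact add_neg_cancel _
  exact (smul_eq_zero.mp h_two).resolve_left two_ne_zero

lemma integral_mul_max_zero_of_odd {g h : G → ℝ} (hg : ∀ x, g (-x) = -g x)
    (hh : ∀ x, h (-x) = -h x) (hg_meas : AEStronglyMeasurable g μ)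
    (hh_meas : AEStronglyMeasurable h μ) (hgh : Integrable (fun x => g x * h x) μ) :
    ∫ x, g x * max (h x) 0 ∂μ = (∫ x, g x * h x ∂μ) / 2 := by
  have hg_abs : Integrable (fun x => g x * |h x|) μ :=
    hgh.mono (hg_meas.mul hh_meas.norm)
      (ae_of_all _ fun x => by simp only [norm_mul, norm_abs_eq_norm, le_refl])
  have hg_abs_odd : ∫ x, g x * |h x| ∂μ = 0 :=
    integral_eq_zero_of_odd fun x => by rw [hg, hh, abs_neg, neg_mul]
  calc ∫ x, g x * max (h x) 0 ∂μ = ∫ x, (g x * h x + g x * |h x|) / 2 ∂μ := by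
        congr 1 with x
        rcases le_total 0 (h x) with hx | hx
        · rw [max_eq_left hx, abs_of_nonneg hx]; ring
        · rw [max_eq_right hx, abs_of_nonpos hx]; ring
    _ = (∫ x, g x * h x ∂μ) / 2 := by
        rw [integral_div, integral_add hgh hg_abs, hg_abs_odd, add_zero]

end OddFunctions

section ProductMoments

variable {μ ν : Measure ℝ}

lemma integrable_fst_mul_add_snd [IsFiniteMeasure μ] [IsFiniteMeasure ν] (hμ : MemLp id 2 μ)
    (hν : Integrable id ν) : Integrable (fun p : ℝ × ℝ => p.1 * (p.1 + p.2)) (μ.prod ν) := by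
  have h := (hμ.integrable_sq.mul_prod (integrable_const (1 : ℝ) (μ := ν))).add
    ((hμ.integrable one_le_two).mul_prod hν)
  refine h.congr (ae_of_all _ fun p => ?_)
  simp only [Pi.add_apply, id]
  ring

lemma integral_fst_mul_add_snd [IsFiniteMeasure μ] [IsProbabilityMeasure ν] (hμ : MemLp id 2 μ)
    (hν : Integrable id ν) :
    ∫ p : ℝ × ℝ, p.1 * (p.1 + p.2) ∂μ.prod ν = ∫ x, x ^ 2 ∂μ + (∫ x, x ∂μ) * ∫ y, y ∂ν := by
  have h_split : (fun p : ℝ × ℝ => p.1 * (p.1 + p.2)) = fun p => p.1 ^ 2 * 1 + p.1 * p.2 := by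
    ext p; ring
  have h_sq : Integrable (fun p : ℝ × ℝ => p.1 ^ 2 * 1) (μ.prod ν) :=
    hμ.integrable_sq.mul_prod (integrable_const 1)
  have h_mul : Integrable (fun p : ℝ × ℝ => p.1 * p.2) (μ.prod ν) :=
    (hμ.integrable one_le_two).mul_prod hν
  rw [h_split, integral_add h_sq h_mul, integral_prod_mul (fun x => x ^ 2) (fun _ => 1),
    integral_prod_mul (fun x => x) (fun y => y)]
  simp

end ProductMoments

lemma max_zero_mul_ite_nonneg (t : ℝ) : max t 0 * (if 0 ≤ t then 1 else 0) = max t 0 := by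
  split_ifs with ht
  · rw [mul_one]
  · rw [mul_zero, max_eq_right (not_le.mp ht).le]

theorem gaussian_relu_sum_moment_general (a b : ℝ≥0) :
    ∫ p : ℝ × ℝ,
        p.1 * max (p.1 + p.2) 0 * (if 0 ≤ p.1 + p.2 then (1:ℝ) else 0)
        ∂((gaussianReal 0 a).prod (gaussianReal 0 b))
      = (a : ℝ) / 2 := by
  have h_sq : MemLp id 2 (gaussianReal 0 a) := memLp_id_gaussianReal 2
  have h_int : Integrable id (gaussianReal 0 b) := (memLp_id_gaussianReal 1).integrable le_rfl
  simp_rw [mul_assoc, max_zero_mul_ite_nonneg]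
  rw [integral_mul_max_zero_of_odd (g := fun p : ℝ × ℝ => p.1) (h := fun p => p.1 + p.2)
      (fun p => rfl) (fun p => (neg_add _ _).symm)
      measurable_fst.aestronglyMeasurable (measurable_fst.add measurable_snd).aestronglyMeasurable
      (integrable_fst_mul_add_snd h_sq h_int),
    integral_fst_mul_add_snd h_sq h_int, integral_sq_gaussianReal_zero, integral_id_gaussianReal,
    zero_mul, add_zero]

theorem gaussian_relu_sum_moment (a b : ℝ≥0) (ha : 0 < a) (hb : 0 < b) :
    ∫ p : ℝ × ℝ,
        p.1 * max (p.1 + p.2) 0 * (if 0 ≤ p.1 + p.2 then (1:ℝ) else 0)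
        ∂((gaussianReal 0 a).prod (gaussianReal 0 b))
      = (a : ℝ) / 2 :=
  gaussian_relu_sum_moment_general a b
end

section
/- Let x₁ ~ N(0, a) and x₂ ~ N(0, b) be independent Gaussian random variables with a, b > 0. Then E[x₁²·1_{x₁ ≥ 0}·1_{x₁+x₂ ≥ 0}] = a/4 + (a/(2π))·(arctan(√(a/b)) + √(ab)/(a+b)). -/
/-! Writing `x₁ = √a z₁`, `x₂ = √b z₂` with `z₁, z₂` standard, the integrand becomes
`a z₁² 1{z₁ ≥ 0} 1{λ z₁ + z₂ ≥ 0}` with `λ = √(a/b)`, which is positively homogeneous of degree 2.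
The standard planar Gaussian density depends only on the radius, so in polar coordinates the
radial factor `(2π)⁻¹ ∫ r³ e^{-r²/2} dr = π⁻¹` splits off, and what remains is `∫ cos² θ` over the
wedge `-arctan λ ≤ θ ≤ π/2`. -/

open MeasureTheory ProbabilityTheory Real Set
open scoped NNReal

local notation "γ₂" => Measure.prod (gaussianReal 0 1) (gaussianReal 0 1)

@[fun_prop]
lemma measurable_ite_nonneg {α : Type*} [MeasurableSpace α] {f : α → ℝ} (hf : Measurable f) :
    Measurable (fun x ↦ if 0 ≤ f x then (1:ℝ) else 0) :=
  Measurable.ite (measurableSet_le measurable_const hf) measurable_const measurable_const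

lemma gaussianReal_zero_eq_map_sqrt_mul (v : ℝ≥0) :
    gaussianReal 0 v = (gaussianReal 0 1).map (√v * ·) := by
  rw [gaussianReal_map_const_mul, mul_zero]
  congr
  ext
  simp

lemma integral_prod_gaussianReal_zero_one (f : ℝ × ℝ → ℝ) :
    ∫ p, f p ∂γ₂ = ∫ p : ℝ × ℝ, (2 * π)⁻¹ * exp (-(p.1 ^ 2 + p.2 ^ 2) / 2) * f p := by
  rw [gaussianReal_of_var_ne_zero _ one_ne_zero,
    prod_withDensity (measurable_gaussianPDF 0 1) (measurable_gaussianPDF 0 1),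
    ← Measure.volume_eq_prod, integral_withDensity_eq_integral_toReal_smul (by fun_prop)
      (ae_of_all _ fun _ ↦ ENNReal.mul_lt_top gaussianPDF_lt_top gaussianPDF_lt_top)]
  congr 1 with p
  rw [ENNReal.toReal_mul, toReal_gaussianPDF, toReal_gaussianPDF, smul_eq_mul,
    gaussianPDFReal, gaussianPDFReal, mul_mul_mul_comm, ← mul_inv,
    mul_self_sqrt (by positivity), ← exp_add]
  congr 3
  · simp
  · push_cast; ring

lemma integral_Ioi_pow_three_mul_exp_neg_sq_div_two :
    ∫ r in Ioi (0:ℝ), r ^ 3 * exp (-r ^ 2 / 2) = 2 := by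
  have h := integral_rpow_mul_exp_neg_mul_rpow (p := 2) (q := 3) (b := 1 / 2) two_pos
    (by norm_num) (by norm_num)
  norm_num at h
  convert h using 5 with r
  ring

theorem integral_prod_gaussianReal_zero_one_of_homogeneous {f : ℝ × ℝ → ℝ}
    (hf : ∀ r : ℝ, 0 < r → ∀ p, f (r • p) = r ^ 2 * f p) :
    ∫ p, f p ∂γ₂ = π⁻¹ * ∫ θ in Ioo (-π) π, f (cos θ, sin θ) := by
  have h_polar : ∀ q ∈ polarCoord.target,
      q.1 • ((2 * π)⁻¹ * exp (-((polarCoord.symm q).1 ^ 2 + (polarCoord.symm q).2 ^ 2) / 2) *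
        f (polarCoord.symm q)) =
      (2 * π)⁻¹ * (q.1 ^ 3 * exp (-q.1 ^ 2 / 2)) * f (cos q.2, sin q.2) := by
    rintro ⟨r, θ⟩ ⟨hr, -⟩
    have hsymm : polarCoord.symm (r, θ) = r • (cos θ, sin θ) := by simp [polarCoord_symm_apply]
    rw [hsymm, hf r hr, smul_eq_mul]
    simp only [Prod.smul_fst, Prod.smul_snd, smul_eq_mul, mul_pow]
    rw [← mul_add, cos_sq_add_sin_sq, mul_one]
    ring
  rw [integral_prod_gaussianReal_zero_one, ← integral_comp_polarCoord_symm,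
    setIntegral_congr_fun polarCoord.open_target.measurableSet h_polar, polarCoord_target,
    Measure.volume_eq_prod, setIntegral_prod_mul (fun r ↦ (2 * π)⁻¹ * (r ^ 3 * exp (-r ^ 2 / 2)))
      (fun θ ↦ f (cos θ, sin θ)), integral_const_mul,
    integral_Ioi_pow_three_mul_exp_neg_sq_div_two]
  ring

lemma abs_le_pi_div_two_of_cos_nonneg {θ : ℝ} (hθ : |θ| < π) (hc : 0 ≤ cos θ) : |θ| ≤ π / 2 := by
  by_contra! h
  rw [← cos_abs] at hc
  linarith [cos_neg_of_pi_div_two_lt_of_lt h (by linarith)]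

lemma neg_arctan_le_iff_mul_cos_add_sin_nonneg {l θ : ℝ} (h₁ : -(π / 2) < θ) (h₂ : θ < π / 2) :
    -arctan l ≤ θ ↔ 0 ≤ l * cos θ + sin θ := by
  have hc : 0 < cos θ := cos_pos_of_mem_Ioo ⟨h₁, h₂⟩
  calc -arctan l ≤ θ ↔ arctan (-l) ≤ arctan (tan θ) := by rw [arctan_neg, arctan_tan h₁ h₂]
    _ ↔ -l ≤ sin θ / cos θ := by rw [arctan_le_arctan_iff, tan_eq_sin_div_cos]
    _ ↔ 0 ≤ l * cos θ + sin θ := by rw [le_div_iff₀ hc]; constructor <;> intro <;> linarith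

lemma cos_nonneg_and_mul_cos_add_sin_nonneg_iff {l θ : ℝ} (hθ : θ ∈ Ioo (-π) π) :
    (0 ≤ cos θ ∧ 0 ≤ l * cos θ + sin θ) ↔ θ ∈ Icc (-arctan l) (π / 2) := by
  have h_lower := neg_pi_div_two_lt_arctan l
  have h_upper := arctan_lt_pi_div_two l
  constructor
  · rintro ⟨hc, hs⟩
    obtain ⟨hge, hle⟩ := abs_le.1 (abs_le_pi_div_two_of_cos_nonneg (abs_lt.2 hθ) hc)
    rcases hge.lt_or_eq with hgt | rfl
    · rcases hle.lt_or_eq with hlt | rfl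
      · exact ⟨(neg_arctan_le_iff_mul_cos_add_sin_nonneg hgt hlt).2 hs, hle⟩
      · exact ⟨by linarith, le_rfl⟩
    · norm_num at hs
  · rintro ⟨h₁, h₂⟩
    have hgt : -(π / 2) < θ := by linarith
    refine ⟨cos_nonneg_of_mem_Icc ⟨hgt.le, h₂⟩, ?_⟩
    rcases h₂.lt_or_eq with hlt | rfl
    · exact (neg_arctan_le_iff_mul_cos_add_sin_nonneg hgt hlt).1 h₁
    · simp

lemma cos_arctan_mul_sin_arctan (l : ℝ) : cos (arctan l) * sin (arctan l) = l / (1 + l ^ 2) := by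
  rw [cos_arctan, sin_arctan, div_mul_div_comm, one_mul, ← sq, sq_sqrt (by positivity)]

lemma integral_cos_sq_mul_indicator_wedge (l : ℝ) :
    ∫ θ in Ioo (-π) π, cos θ ^ 2 * (if 0 ≤ cos θ then (1:ℝ) else 0) *
        (if 0 ≤ l * cos θ + sin θ then (1:ℝ) else 0) =
      π / 4 + (arctan l + l / (1 + l ^ 2)) / 2 := by
  have h_wedge : ∀ θ ∈ Ioo (-π) π, cos θ ^ 2 * (if 0 ≤ cos θ then (1:ℝ) else 0) *
      (if 0 ≤ l * cos θ + sin θ then (1:ℝ) else 0) =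
      (Icc (-arctan l) (π / 2)).indicator (fun θ ↦ cos θ ^ 2) θ := by
    intro θ hθ
    simp only [indicator_apply, ← cos_nonneg_and_mul_cos_add_sin_nonneg_iff hθ]
    split_ifs <;> simp_all
  have h_lower := neg_pi_div_two_lt_arctan l
  have h_upper := arctan_lt_pi_div_two l
  have h_sub : Icc (-arctan l) (π / 2) ⊆ Ioo (-π) π := fun θ ⟨h₁, h₂⟩ ↦
    ⟨by linarith, by linarith [pi_pos]⟩
  rw [setIntegral_congr_fun measurableSet_Ioo h_wedge, setIntegral_indicator measurableSet_Icc,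
    inter_eq_right.2 h_sub, integral_Icc_eq_integral_Ioc,
    ← intervalIntegral.integral_of_le (by linarith), integral_cos_sq,
    cos_neg, sin_neg, cos_pi_div_two, mul_neg, cos_arctan_mul_sin_arctan]
  ring

theorem integral_sq_indicator_wedge (l : ℝ) :
    ∫ z : ℝ × ℝ, z.1 ^ 2 * (if 0 ≤ z.1 then (1:ℝ) else 0) *
        (if 0 ≤ l * z.1 + z.2 then (1:ℝ) else 0) ∂γ₂ =
      1 / 4 + (arctan l + l / (1 + l ^ 2)) / (2 * π) := by
  rw [integral_prod_gaussianReal_zero_one_of_homogeneous, integral_cos_sq_mul_indicator_wedge]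
  · field_simp
  rintro r hr ⟨x, y⟩
  have h_factor : l * (r * x) + r * y = r * (l * x + y) := by ring
  simp only [Prod.smul_mk, smul_eq_mul, h_factor, mul_nonneg_iff_of_pos_left hr]
  ring

lemma sq_mul_ite_mul_ite_const_mul {c d : ℝ} (hc : 0 ≤ c) (hd : 0 < d) (x y : ℝ) :
    (c * x) ^ 2 * (if 0 ≤ c * x then (1:ℝ) else 0) * (if 0 ≤ c * x + d * y then (1:ℝ) else 0) =
      c ^ 2 * (x ^ 2 * (if 0 ≤ x then (1:ℝ) else 0) *
        (if 0 ≤ c / d * x + y then (1:ℝ) else 0)) := by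
  have h_factor : c * x + d * y = d * (c / d * x + y) := by field_simp
  simp only [h_factor, mul_nonneg_iff_of_pos_left hd]
  rcases hc.eq_or_lt with rfl | hc
  · simp
  · simp only [mul_nonneg_iff_of_pos_left hc]
    ring

theorem gaussian_sq_indicator_moment_general (a b : ℝ≥0) (hb : 0 < b) :
    ∫ p : ℝ × ℝ,
        p.1 ^ 2 * (if 0 ≤ p.1 then (1:ℝ) else 0) *
          (if 0 ≤ p.1 + p.2 then (1:ℝ) else 0)
        ∂((gaussianReal 0 a).prod (gaussianReal 0 b))
      = (a : ℝ) / 4 + ((a : ℝ) / (2 * Real.pi)) *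
          (Real.arctan (Real.sqrt ((a : ℝ) / (b : ℝ))) +
            Real.sqrt ((a : ℝ) * (b : ℝ)) / ((a : ℝ) + (b : ℝ))) := by
  have hsb : 0 < √(b:ℝ) := sqrt_pos.2 hb
  rw [gaussianReal_zero_eq_map_sqrt_mul a, gaussianReal_zero_eq_map_sqrt_mul b,
    Measure.map_prod_map _ _ (by fun_prop) (by fun_prop), integral_map (by fun_prop) (by fun_prop)]
  simp only [Prod.map_fst, Prod.map_snd,
    sq_mul_ite_mul_ite_const_mul (sqrt_nonneg (a:ℝ)) hsb, sq_sqrt a.coe_nonneg]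
  rw [integral_const_mul, integral_sq_indicator_wedge, ← sqrt_div' _ b.coe_nonneg]
  have h_ratio : √(a / b : ℝ) / (1 + √(a / b : ℝ) ^ 2) = √(a * b : ℝ) / (a + b) := by
    rw [sqrt_div' _ b.coe_nonneg, sqrt_mul a.coe_nonneg, div_pow, sq_sqrt a.coe_nonneg,
      sq_sqrt b.coe_nonneg]
    field_simp
    rw [sq_sqrt b.coe_nonneg]
    ring
  rw [h_ratio]
  ring

theorem gaussian_sq_indicator_moment (a b : ℝ≥0) (ha : 0 < a) (hb : 0 < b) :
    ∫ p : ℝ × ℝ,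
        p.1 ^ 2 * (if 0 ≤ p.1 then (1:ℝ) else 0) *
          (if 0 ≤ p.1 + p.2 then (1:ℝ) else 0)
        ∂((gaussianReal 0 a).prod (gaussianReal 0 b))
      = (a : ℝ) / 4 + ((a : ℝ) / (2 * Real.pi)) *
          (Real.arctan (Real.sqrt ((a : ℝ) / (b : ℝ))) +
            Real.sqrt ((a : ℝ) * (b : ℝ)) / ((a : ℝ) + (b : ℝ))) :=
  gaussian_sq_indicator_moment_general a b hb
end

section
/- Let φ and Φ denote the standard normal density and CDF respectively. For λ ≥ 0, define I(λ) = ∫₀^∞ z² Φ(λz) φ(z) dz. Then dI/dλ = 1/(π(1+λ²)²) for all λ > 0, and consequently I(λ) = 1/4 + (1/(2π))(arctan λ + λ/(1+λ²)). -/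
open MeasureTheory

noncomputable def stdGaussPDF (z : ℝ) : ℝ :=
  (Real.sqrt (2 * Real.pi))⁻¹ * Real.exp (-z ^ 2 / 2)

noncomputable def stdGaussCDF (z : ℝ) : ℝ :=
  ∫ t in Set.Iic z, stdGaussPDF t

noncomputable def Ifun (l : ℝ) : ℝ :=
  ∫ z in Set.Ioi (0 : ℝ), z ^ 2 * stdGaussCDF (l * z) * stdGaussPDF z

/-!
Differentiating `s ↦ Φ(s z)` gives `Φ(λz) = 1/2 + ∫₀^λ z φ(sz) ds`. Substituting this into `I(λ)`
and exchanging the order of integration,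
`I(λ) = 1/2 ∫₀^∞ z² φ(z) dz + ∫₀^λ J(s) ds = 1/4 + ∫₀^λ J(s) ds`, where
`J(s) = ∫₀^∞ z³ φ(sz) φ(z) dz = (2π)⁻¹ ∫₀^∞ z³ e^{-(1+s²)z²/2} dz = 1/(π(1+s²)²)`; both moments are
Gamma integrals. Hence `I' = J`, and `(arctan s + s/(1+s²))/2` is an antiderivative of `1/(1+s²)²`.
-/

open Real Set Filter Topology

lemma integrableOn_Ioi_pow_mul_exp_neg_mul_sq {b : ℝ} (hb : 0 < b) (n : ℕ) :
    IntegrableOn (fun x : ℝ => x ^ n * exp (-b * x ^ 2)) (Ioi 0) := by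
  simpa only [rpow_natCast] using
    integrableOn_rpow_mul_exp_neg_mul_sq hb (s := n) (by linarith [n.cast_nonneg (α := ℝ)])

lemma integral_Ioi_pow_mul_exp_neg_mul_sq {b : ℝ} (hb : 0 < b) (n : ℕ) :
    ∫ x in Ioi (0 : ℝ), x ^ n * exp (-b * x ^ 2) =
      b ^ (-((n : ℝ) + 1) / 2) / 2 * Gamma ((n + 1) / 2) := by
  have h := integral_rpow_mul_exp_neg_mul_rpow two_pos
    (by linarith [n.cast_nonneg (α := ℝ)] : -1 < (n : ℝ)) hb
  simp only [rpow_natCast, rpow_two] at h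
  rw [h]; ring

lemma integral_Ioi_sq_mul_exp_neg_half_mul_sq :
    ∫ x in Ioi (0 : ℝ), x ^ 2 * exp (-(1 / 2) * x ^ 2) = √(2 * π) / 2 := by
  rw [integral_Ioi_pow_mul_exp_neg_mul_sq (by norm_num) 2,
    show ((2 : ℕ) + 1 : ℝ) / 2 = 1 / 2 + 1 by norm_num, Gamma_add_one (by norm_num),
    Gamma_one_half_eq, show (-((2 : ℕ) + 1 : ℝ) / 2) = -(1 / 2 + 1) by norm_num,
    rpow_neg (by norm_num), rpow_add (by norm_num), rpow_one, ← sqrt_eq_rpow,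
    sqrt_div' _ (by norm_num), sqrt_one, sqrt_mul zero_le_two]
  field_simp

lemma integral_Ioi_cube_mul_exp_neg_mul_sq {b : ℝ} (hb : 0 < b) :
    ∫ x in Ioi (0 : ℝ), x ^ 3 * exp (-b * x ^ 2) = 1 / (2 * b ^ 2) := by
  rw [integral_Ioi_pow_mul_exp_neg_mul_sq hb 3]
  norm_num [Gamma_two, rpow_neg hb.le]
  ring

lemma MeasureTheory.Integrable.intervalIntegral_prod_right {α E : Type*} [MeasurableSpace α]
    [NormedAddCommGroup E] [NormedSpace ℝ E] {μ : Measure α} [SFinite μ] {a b : ℝ}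
    {f : ℝ → α → E} (hf : Integrable (Function.uncurry f) ((volume.restrict (uIoc a b)).prod μ)) :
    Integrable (fun y => ∫ x in a..b, f x y) μ := by
  rcases le_total a b with hab | hab
  · simp only [uIoc_of_le hab] at hf
    simpa only [intervalIntegral.integral_of_le hab, Function.uncurry_apply_pair] using
      hf.integral_prod_right
  · simp only [uIoc_of_ge hab] at hf
    simp only [intervalIntegral.integral_of_ge hab]
    exact hf.integral_prod_right.neg

lemma stdGaussPDF_eq (z : ℝ) : stdGaussPDF z = (√(2 * π))⁻¹ * exp (-(1 / 2) * z ^ 2) := by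
  rw [stdGaussPDF]; ring_nf

@[fun_prop]
lemma continuous_stdGaussPDF : Continuous stdGaussPDF := by
  unfold stdGaussPDF; fun_prop

lemma integrable_stdGaussPDF : Integrable stdGaussPDF := by
  rw [funext stdGaussPDF_eq]
  exact (integrable_exp_neg_mul_sq (by norm_num)).const_mul _

lemma integral_Ioi_stdGaussPDF : ∫ z in Ioi (0 : ℝ), stdGaussPDF z = 1 / 2 := by
  simp only [stdGaussPDF_eq]
  rw [integral_const_mul, integral_gaussian_Ioi, div_div_eq_mul_div, div_one, mul_comm π]
  field_simp

lemma stdGaussCDF_zero : stdGaussCDF 0 = 1 / 2 := by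
  rw [stdGaussCDF, ← integral_Ioi_stdGaussPDF, ← neg_zero, ← integral_comp_neg_Iic]
  simp only [stdGaussPDF, even_two.neg_pow, neg_zero]

lemma hasDerivAt_stdGaussCDF (x : ℝ) : HasDerivAt stdGaussCDF (stdGaussPDF x) x := by
  have h : stdGaussCDF = fun y => stdGaussCDF 0 + ∫ t in (0 : ℝ)..y, stdGaussPDF t := by
    ext y
    rw [← intervalIntegral.integral_Iic_sub_Iic integrable_stdGaussPDF.integrableOn
      integrable_stdGaussPDF.integrableOn, stdGaussCDF, stdGaussCDF]
    ring
  rw [h]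
  exact ((continuous_stdGaussPDF.integral_hasStrictDerivAt 0 x).hasDerivAt).const_add _

lemma stdGaussCDF_mul_eq (l z : ℝ) :
    stdGaussCDF (l * z) = 1 / 2 + ∫ s in (0 : ℝ)..l, z * stdGaussPDF (s * z) := by
  have hderiv (s : ℝ) : HasDerivAt (fun s => stdGaussCDF (s * z)) (z * stdGaussPDF (s * z)) s := by
    exact ((hasDerivAt_stdGaussCDF (s * z)).comp s (hasDerivAt_mul_const z)).congr_deriv (mul_comm _ _)
  rw [intervalIntegral.integral_eq_sub_of_hasDerivAt (fun s _ => hderiv s)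
    (Continuous.intervalIntegrable (by fun_prop) _ _), zero_mul, stdGaussCDF_zero]
  ring

lemma cube_mul_stdGaussPDF_mul_stdGaussPDF (s z : ℝ) :
    z ^ 3 * stdGaussPDF (s * z) * stdGaussPDF z =
      (2 * π)⁻¹ * (z ^ 3 * exp (-((1 + s ^ 2) / 2) * z ^ 2)) := by
  have h : (√(2 * π))⁻¹ * (√(2 * π))⁻¹ = (2 * π)⁻¹ := by
    rw [← mul_inv, mul_self_sqrt (by positivity)]
  simp only [stdGaussPDF_eq]
  calc _ = ((√(2 * π))⁻¹ * (√(2 * π))⁻¹) *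
        (z ^ 3 * (exp (-(1 / 2) * (s * z) ^ 2) * exp (-(1 / 2) * z ^ 2))) := by ring
    _ = _ := by rw [h, ← exp_add]; ring_nf

lemma integral_Ioi_cube_mul_stdGaussPDF_mul_stdGaussPDF (s : ℝ) :
    ∫ z in Ioi (0 : ℝ), z ^ 3 * stdGaussPDF (s * z) * stdGaussPDF z =
      1 / (π * (1 + s ^ 2) ^ 2) := by
  simp only [cube_mul_stdGaussPDF_mul_stdGaussPDF]
  rw [integral_const_mul, integral_Ioi_cube_mul_exp_neg_mul_sq (by positivity)]
  field_simp

lemma integrable_cube_mul_stdGaussPDF_mul_stdGaussPDF (l : ℝ) :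
    Integrable (Function.uncurry fun s z => z ^ 3 * stdGaussPDF (s * z) * stdGaussPDF z)
      ((volume.restrict (uIoc 0 l)).prod (volume.restrict (Ioi 0))) := by
  have hdom : Integrable (fun p : ℝ × ℝ => 1 * ((2 * π)⁻¹ * (p.2 ^ 3 * exp (-(1 / 2) * p.2 ^ 2))))
      ((volume.restrict (uIoc 0 l)).prod (volume.restrict (Ioi 0))) :=
    (show Integrable (fun _ : ℝ => (1 : ℝ)) (volume.restrict (uIoc 0 l)) from
      integrableOn_const measure_Ioc_lt_top.ne).mul_prod
      ((integrableOn_Ioi_pow_mul_exp_neg_mul_sq (b := 1 / 2) (by norm_num) 3).const_mul _)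
  refine hdom.mono' (Continuous.aestronglyMeasurable (by fun_prop)) ?_
  rw [Measure.prod_restrict]
  filter_upwards [ae_restrict_mem (measurableSet_uIoc.prod measurableSet_Ioi)] with p hp
  have hz : 0 < p.2 := hp.2
  rw [Function.uncurry_apply_pair, cube_mul_stdGaussPDF_mul_stdGaussPDF,
    norm_of_nonneg (by positivity), one_mul]
  gcongr
  nlinarith [sq_nonneg (p.1 * p.2)]

lemma integral_Ioi_sq_mul_stdGaussPDF : ∫ z in Ioi (0 : ℝ), z ^ 2 * stdGaussPDF z = 1 / 2 := by
  simp only [stdGaussPDF_eq, mul_left_comm _ (√(2 * π))⁻¹]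
  rw [integral_const_mul, integral_Ioi_sq_mul_exp_neg_half_mul_sq]
  field_simp

lemma Ifun_eq_quarter_add_integral (l : ℝ) :
    Ifun l = 1 / 4 + ∫ s in (0 : ℝ)..l, 1 / (π * (1 + s ^ 2) ^ 2) := by
  have hF := integrable_cube_mul_stdGaussPDF_mul_stdGaussPDF l
  have hsq_int : IntegrableOn (fun z => z ^ 2 * stdGaussPDF z) (Ioi 0) := by
    simp only [stdGaussPDF_eq, mul_left_comm _ (√(2 * π))⁻¹]
    exact (integrableOn_Ioi_pow_mul_exp_neg_mul_sq (by norm_num) 2).const_mul _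
  calc
    Ifun l = ∫ z in Ioi (0 : ℝ), (1 / 2 * (z ^ 2 * stdGaussPDF z) +
        ∫ s in (0 : ℝ)..l, z ^ 3 * stdGaussPDF (s * z) * stdGaussPDF z) := by
      refine setIntegral_congr_fun measurableSet_Ioi fun z _ => ?_
      have h : ∫ s in (0 : ℝ)..l, z ^ 3 * stdGaussPDF (s * z) * stdGaussPDF z =
          z ^ 2 * (∫ s in (0 : ℝ)..l, z * stdGaussPDF (s * z)) * stdGaussPDF z := by
        rw [← intervalIntegral.integral_const_mul, ← intervalIntegral.integral_mul_const]
        exact intervalIntegral.integral_congr fun s _ => by ring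
      rw [h, stdGaussCDF_mul_eq]
      ring
    _ = 1 / 2 * (∫ z in Ioi (0 : ℝ), z ^ 2 * stdGaussPDF z) +
        ∫ s in (0 : ℝ)..l, ∫ z in Ioi (0 : ℝ), z ^ 3 * stdGaussPDF (s * z) * stdGaussPDF z := by
      rw [integral_add (hsq_int.const_mul _) hF.intervalIntegral_prod_right, integral_const_mul,
        intervalIntegral_integral_swap hF]
    _ = _ := by
      simp only [integral_Ioi_sq_mul_stdGaussPDF, integral_Ioi_cube_mul_stdGaussPDF_mul_stdGaussPDF]
      norm_num

lemma hasDerivAt_Ifun (l : ℝ) : HasDerivAt Ifun (1 / (π * (1 + l ^ 2) ^ 2)) l := by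
  rw [funext Ifun_eq_quarter_add_integral]
  have hcont : Continuous fun s : ℝ => 1 / (π * (1 + s ^ 2) ^ 2) := by
    fun_prop (disch := intros; positivity)
  exact (hcont.integral_hasStrictDerivAt 0 l).hasDerivAt.const_add _

lemma integral_one_div_one_add_sq_sq (a b : ℝ) :
    ∫ x in a..b, 1 / (1 + x ^ 2) ^ 2 =
      (arctan b + b / (1 + b ^ 2)) / 2 - (arctan a + a / (1 + a ^ 2)) / 2 := by
  have hderiv (x : ℝ) :
      HasDerivAt (fun x => (arctan x + x / (1 + x ^ 2)) / 2) (1 / (1 + x ^ 2) ^ 2) x := by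
    have hx : 1 + x ^ 2 ≠ 0 := by positivity
    have h := ((hasDerivAt_arctan x).add ((hasDerivAt_id' x).div
      ((hasDerivAt_pow 2 x).const_add 1) hx)).div_const 2
    refine h.congr_deriv ?_
    field_simp
    ring
  exact intervalIntegral.integral_eq_sub_of_hasDerivAt (fun x _ => hderiv x)
    (Continuous.intervalIntegrable (by fun_prop (disch := intros; positivity)) _ _)

lemma Ifun_eq (l : ℝ) :
    Ifun l = 1 / 4 + (1 / (2 * π)) * (arctan l + l / (1 + l ^ 2)) := by
  simp only [Ifun_eq_quarter_add_integral, mul_comm π, ← div_div]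
  rw [intervalIntegral.integral_div, integral_one_div_one_add_sq_sq]
  simp only [arctan_zero]
  ring

theorem Ifun_deriv_and_value :
    (∀ l : ℝ, 0 < l →
        HasDerivAt Ifun (1 / (Real.pi * (1 + l ^ 2) ^ 2)) l) ∧
    (∀ l : ℝ, 0 ≤ l →
        Ifun l = 1 / 4 +
          (1 / (2 * Real.pi)) * (Real.arctan l + l / (1 + l ^ 2))) :=
  ⟨fun l _ => hasDerivAt_Ifun l, fun l _ => Ifun_eq l⟩
end

section
/- Let x₁ ~ N(0, a) and x₂ ~ N(0, b) be independent centered Gaussians with a, b > 0. Then E[x₁·x₂·1_{x₁ ≥ 0}·1_{x₁+x₂ ≥ 0}] = b√(ab)/(2π(a+b)). -/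
/-!
Integrating out `x₂` first: for `Y ~ N(0, v)` one has `E[Y; Y ≥ t] = v φ_v(t)`, because
`y φ_v(y) = -v φ_v'(y)`. With `t = -x₁` this leaves `b E[x₁ φ_b(x₁); x₁ ≥ 0]`. Since
`φ_a φ_b = φ_{a+b}(0) φ_c` with `c = ab/(a+b)`, the same identity (at `t = 0`, for the
variance `c`) gives `b φ_{a+b}(0) c φ_c(0) = b √(ab) / (2π(a+b))`.
-/

open MeasureTheory ProbabilityTheory Real Filter Set
open scoped NNReal Topology

theorem integral_Ioi_mul_exp_neg_mul_sq {c : ℝ} (hc : 0 < c) (t : ℝ) :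
    ∫ x in Ioi t, x * exp (-c * x ^ 2) = exp (-c * t ^ 2) / (2 * c) := by
  have hderiv (x : ℝ) : HasDerivAt (fun y ↦ -(2 * c)⁻¹ * exp (-c * y ^ 2))
      (x * exp (-c * x ^ 2)) x := by
    refine (((hasDerivAt_pow 2 x).const_mul (-c)).exp.const_mul _).congr_deriv ?_
    field_simp
    ring
  have hlim : Tendsto (fun y ↦ -(2 * c)⁻¹ * exp (-c * y ^ 2)) atTop (𝓝 0) := by
    rw [← mul_zero (-(2 * c)⁻¹)]
    refine (tendsto_exp_atBot.comp ?_).const_mul _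
    exact (tendsto_pow_atTop two_ne_zero).const_mul_atTop_of_neg (neg_lt_zero.2 hc)
  rw [integral_Ioi_of_hasDerivAt_of_tendsto' (fun x _ ↦ hderiv x)
    (integrable_mul_exp_neg_mul_sq hc).integrableOn hlim]
  ring

namespace ProbabilityTheory

lemma gaussianPDFReal_zero_mean (v : ℝ≥0) (x : ℝ) :
    gaussianPDFReal 0 v x = (√(2 * π * v))⁻¹ * exp (-(2 * v : ℝ)⁻¹ * x ^ 2) := by
  rw [gaussianPDFReal, sub_zero, neg_div, div_eq_inv_mul, neg_mul]

lemma gaussianPDFReal_zero_mean_neg (v : ℝ≥0) (x : ℝ) :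
    gaussianPDFReal 0 v (-x) = gaussianPDFReal 0 v x := by
  simp only [gaussianPDFReal_zero_mean, neg_sq]

lemma gaussianPDFReal_mul_gaussianPDFReal {a b : ℝ≥0} (ha : a ≠ 0) (hb : b ≠ 0) (x : ℝ) :
    gaussianPDFReal 0 a x * gaussianPDFReal 0 b x
      = gaussianPDFReal 0 (a + b) 0 * gaussianPDFReal 0 (a * b / (a + b)) x := by
  have ha' : (0 : ℝ) < a := by positivity
  have hb' : (0 : ℝ) < b := by positivity
  have hsqrt : √(2 * π * a) * √(2 * π * b)
      = √(2 * π * (a + b)) * √(2 * π * (a * b / (a + b))) := by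
    rw [← sqrt_mul (by positivity), ← sqrt_mul (by positivity)]
    congr 1
    field_simp
  have hexp : -(2 * (a : ℝ))⁻¹ * x ^ 2 + -(2 * (b : ℝ))⁻¹ * x ^ 2
      = -(2 * ((a : ℝ) * b / (a + b)))⁻¹ * x ^ 2 := by
    field_simp
    ring
  simp only [gaussianPDFReal_zero_mean, NNReal.coe_add, NNReal.coe_div, NNReal.coe_mul]
  rw [mul_mul_mul_comm, ← mul_inv, hsqrt, ← exp_add, hexp, mul_inv]
  simp only [zero_pow two_ne_zero, mul_zero, exp_zero, mul_one]
  ring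

theorem integral_Ioi_gaussianPDFReal_mul (v : ℝ≥0) (t : ℝ) :
    ∫ x in Ioi t, gaussianPDFReal 0 v x * x = v * gaussianPDFReal 0 v t := by
  rcases eq_zero_or_pos v with rfl | hv
  · simp
  have hc : 0 < (2 * v : ℝ)⁻¹ := by positivity
  simp_rw [gaussianPDFReal_zero_mean, mul_assoc, mul_comm (exp _)]
  rw [integral_const_mul, integral_Ioi_mul_exp_neg_mul_sq hc]
  field_simp

theorem setIntegral_gaussianReal_eq_setIntegral_smul {E : Type*} [NormedAddCommGroup E]
    [NormedSpace ℝ E] {μ : ℝ} {v : ℝ≥0} (hv : v ≠ 0) {f : ℝ → E} {s : Set ℝ}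
    (hs : MeasurableSet s) :
    ∫ x in s, f x ∂gaussianReal μ v = ∫ x in s, gaussianPDFReal μ v x • f x := by
  rw [gaussianReal_of_var_ne_zero _ hv, setIntegral_withDensity_eq_setIntegral_toReal_smul
    (measurable_gaussianPDF _ _) (ae_of_all _ fun _ ↦ gaussianPDF_lt_top) _ hs]
  simp_rw [toReal_gaussianPDF]

theorem setIntegral_Ici_id_gaussianReal (v : ℝ≥0) (t : ℝ) :
    ∫ x in Ici t, x ∂gaussianReal 0 v = v * gaussianPDFReal 0 v t := by
  rcases eq_or_ne v 0 with rfl | hv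
  · simp [setIntegral_dirac]
  rw [setIntegral_gaussianReal_eq_setIntegral_smul hv measurableSet_Ici,
    integral_Ici_eq_integral_Ioi, ← integral_Ioi_gaussianPDFReal_mul]
  simp_rw [smul_eq_mul]

theorem setIntegral_Ici_mul_gaussianPDFReal_gaussianReal {a b : ℝ≥0} (ha : 0 < a) (hb : 0 < b) :
    ∫ x in Ici 0, x * gaussianPDFReal 0 b x ∂gaussianReal 0 a
      = √(a * b : ℝ) / (2 * π * (a + b)) := by
  have ha' : (0 : ℝ) < a := ha
  have hb' : (0 : ℝ) < b := hb
  have hprod (x : ℝ) : gaussianPDFReal 0 a x • (x * gaussianPDFReal 0 b x)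
      = gaussianPDFReal 0 (a + b) 0 * (gaussianPDFReal 0 (a * b / (a + b)) x * x) := by
    rw [smul_eq_mul, ← mul_assoc _ _ x, ← gaussianPDFReal_mul_gaussianPDFReal ha.ne' hb.ne']
    ring
  rw [setIntegral_gaussianReal_eq_setIntegral_smul ha.ne' measurableSet_Ici,
    integral_Ici_eq_integral_Ioi]
  simp_rw [hprod]
  rw [integral_const_mul, integral_Ioi_gaussianPDFReal_mul]
  have hsqrt : √(2 * π * (a + b)) * √(2 * π * (a * b / (a + b))) = 2 * π * √(a * b) := by
    rw [← sqrt_mul (by positivity), show 2 * π * (a + b) * (2 * π * (a * b / (a + b)))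
      = (2 * π) ^ 2 * (a * b) by field_simp, sqrt_mul (by positivity), sqrt_sq (by positivity)]
  have hs : √(a * b : ℝ) ^ 2 = a * b := sq_sqrt (by positivity)
  simp only [gaussianPDFReal_zero_mean, zero_pow two_ne_zero, mul_zero, exp_zero, mul_one,
    NNReal.coe_add, NNReal.coe_div, NNReal.coe_mul]
  rw [mul_left_comm _ (_ / _), ← mul_inv, hsqrt]
  field_simp
  rw [hs]

lemma integrable_fst_mul_snd_gaussianReal_prod (μ₁ μ₂ : ℝ) (v₁ v₂ : ℝ≥0) :
    Integrable (fun p : ℝ × ℝ ↦ p.1 * p.2) ((gaussianReal μ₁ v₁).prod (gaussianReal μ₂ v₂)) :=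
  Integrable.mul_prod (f := id) (g := id) ((memLp_id_gaussianReal 1).integrable le_rfl)
    ((memLp_id_gaussianReal 1).integrable le_rfl)

end ProbabilityTheory

theorem gaussian_cross_indicator_moment (a b : ℝ≥0) (ha : 0 < a) (hb : 0 < b) :
    ∫ p : ℝ × ℝ,
        p.1 * p.2 * (if 0 ≤ p.1 then (1:ℝ) else 0) *
          (if 0 ≤ p.1 + p.2 then (1:ℝ) else 0)
        ∂((gaussianReal 0 a).prod (gaussianReal 0 b))
      = (b : ℝ) * Real.sqrt ((a : ℝ) * (b : ℝ)) /
          (2 * Real.pi * ((a : ℝ) + (b : ℝ))) := by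
  set F : ℝ × ℝ → ℝ := fun p ↦ p.1 * p.2 * (if 0 ≤ p.1 then (1:ℝ) else 0) *
    (if 0 ≤ p.1 + p.2 then (1:ℝ) else 0)
  have hint : Integrable F ((gaussianReal 0 a).prod (gaussianReal 0 b)) := by
    have hF : F = {p | 0 ≤ p.1 ∧ 0 ≤ p.1 + p.2}.indicator (fun p ↦ p.1 * p.2) := by
      ext p
      by_cases h1 : 0 ≤ p.1 <;> by_cases h2 : 0 ≤ p.1 + p.2 <;> simp [F, h1, h2]
    rw [hF]
    exact (integrable_fst_mul_snd_gaussianReal_prod 0 0 a b).indicator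
      ((measurableSet_le measurable_const measurable_fst).inter
        (measurableSet_le measurable_const (measurable_fst.add measurable_snd)))
  have hslice (x : ℝ) : ∫ y, F (x, y) ∂gaussianReal 0 b
      = b * (Ici 0).indicator (fun x ↦ x * gaussianPDFReal 0 b x) x := by
    have hF (y : ℝ) : F (x, y) = (Ici 0).indicator id x * (Ici (-x)).indicator (fun y ↦ y) y := by
      simp only [F, indicator, mem_Ici, neg_le_iff_add_nonneg', id]
      split_ifs <;> ring
    simp_rw [hF]
    rw [integral_const_mul, integral_indicator measurableSet_Ici, setIntegral_Ici_id_gaussianReal,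
      gaussianPDFReal_zero_mean_neg]
    by_cases hx : 0 ≤ x <;> simp [hx]
    ring
  rw [integral_prod F hint]
  simp_rw [hslice]
  rw [integral_const_mul, integral_indicator measurableSet_Ici,
    setIntegral_Ici_mul_gaussianPDFReal_gaussianReal ha hb, mul_div_assoc]
end

section
/- Let x₁ ~ N(0,a), x₂ ~ N(0,b), x₃ ~ N(0,c) be three independent centered Gaussians with a,b,c > 0. Then E[x₁·x₂·1_{x₁ ≥ 0}·1_{x₁+x₂+x₃ ≥ 0}] = b·√(a(b+c))/(2π(a+b+c)). -/
/-!
Integrate out `x₂` first. For a centred Gaussian density `φ_v` one has `y φ_v(y) = -v φ_v'(y)`,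
so the truncated first moment is `∫_{y ≥ t} y φ_v(y) dy = v φ_v(t)`. Integrating this over `x₃`
convolves `φ_b` with `φ_c`, giving the inner expectation `b φ_{b+c}(x₁)`. What remains,
`b ∫_{x ≥ 0} x φ_a(x) φ_{b+c}(x) dx`, is again a truncated first moment: completing the square,
`φ_a φ_{b+c} = φ_{a+b+c}(0) φ_σ` with `σ = a(b+c)/(a+b+c)`.
-/

open MeasureTheory ProbabilityTheory Real Set Filter Topology
open scoped NNReal

lemma MeasureTheory.Integrable.mul_ite_nonneg {α : Type*} [MeasurableSpace α]
    {ν : Measure α} {f g : α → ℝ} (hf : Integrable f ν) (hg : Measurable g) :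
    Integrable (fun a => f a * if 0 ≤ g a then 1 else 0) ν :=
  hf.mul_bdd (Measurable.ite (measurableSet_le measurable_const hg) measurable_const
    measurable_const).aestronglyMeasurable (c := 1) (ae_of_all _ fun a => by split_ifs <;> simp)

namespace ProbabilityTheory

variable {μ : ℝ} {v : ℝ≥0}

@[simp]
lemma gaussianPDFReal_self : gaussianPDFReal μ v μ = (√(2 * π * v))⁻¹ := by
  simp [gaussianPDFReal]

lemma gaussianPDFReal_neg (x : ℝ) : gaussianPDFReal μ v (-x) = gaussianPDFReal (-μ) v x := by
  simp only [gaussianPDFReal, sub_neg_eq_add, ← neg_add', neg_sq, add_comm]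

lemma integrable_id_gaussianReal : Integrable id (gaussianReal μ v) :=
  (memLp_id_gaussianReal 1).integrable le_rfl

lemma hasDerivAt_gaussianPDFReal (x : ℝ) :
    HasDerivAt (gaussianPDFReal μ v) (-((x - μ) / v) * gaussianPDFReal μ v x) x := by
  have h : HasDerivAt (fun y => -(y - μ) ^ 2 / (2 * v)) (-((x - μ) / v)) x := by
    refine ((((hasDerivAt_id' x).sub_const μ).pow 2).neg.div_const (2 * (v : ℝ))).congr_deriv ?_
    simp only [Nat.cast_ofNat, mul_one]
    ring
  refine (h.exp.const_mul (√(2 * π * v))⁻¹).congr_deriv ?_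
  rw [gaussianPDFReal]
  ring

lemma tendsto_gaussianPDFReal_atTop : Tendsto (gaussianPDFReal μ v) atTop (𝓝 0) := by
  rcases eq_or_ne v 0 with rfl | hv
  · rw [gaussianPDFReal_zero_var]
    exact tendsto_const_nhds
  have hv' : (0 : ℝ) < v := by positivity
  have h : Tendsto (fun y => -(y - μ) ^ 2 / (2 * v)) atTop atBot := by
    simp only [neg_div]
    exact tendsto_neg_atTop_atBot.comp <| ((tendsto_pow_atTop two_ne_zero).comp
      (tendsto_atTop_add_const_right _ (-μ) tendsto_id)).atTop_div_const (by positivity)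
  simpa [gaussianPDFReal_def] using (tendsto_exp_atBot.comp h).const_mul (√(2 * π * v))⁻¹

lemma integrable_sub_mul_gaussianPDFReal :
    Integrable fun y => (y - μ) * gaussianPDFReal μ v y := by
  rcases eq_or_ne v 0 with rfl | hv
  · simp
  have h := ((integrable_mul_exp_neg_mul_sq (b := (2 * v : ℝ)⁻¹) (by positivity)).comp_sub_right
    μ).const_mul (√(2 * π * v))⁻¹
  refine h.congr (ae_of_all _ fun y => ?_)
  simp only [gaussianPDFReal]
  ring_nf

lemma integral_Ici_sub_mul_gaussianPDFReal (t : ℝ) :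
    ∫ y in Ici t, (y - μ) * gaussianPDFReal μ v y = v * gaussianPDFReal μ v t := by
  rcases eq_or_ne v 0 with rfl | hv
  · simp
  have hderiv : ∀ y ∈ Ici t, HasDerivAt (fun y => -(v : ℝ) * gaussianPDFReal μ v y)
      ((y - μ) * gaussianPDFReal μ v y) y := fun y _ => by
    refine ((hasDerivAt_gaussianPDFReal y).const_mul (-(v : ℝ))).congr_deriv ?_
    field_simp
  rw [integral_Ici_eq_integral_Ioi, integral_Ioi_of_hasDerivAt_of_tendsto' hderiv
    integrable_sub_mul_gaussianPDFReal.integrableOn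
    (by simpa using tendsto_gaussianPDFReal_atTop.const_mul (-(v : ℝ)))]
  ring

lemma gaussianPDFReal_mul_gaussianPDFReal_s10 {μ₁ μ₂ : ℝ} {v₁ v₂ : ℝ≥0} (h₁ : v₁ ≠ 0) (h₂ : v₂ ≠ 0)
    (x : ℝ) :
    gaussianPDFReal μ₁ v₁ x * gaussianPDFReal μ₂ v₂ x =
      gaussianPDFReal μ₁ (v₁ + v₂) μ₂ *
        gaussianPDFReal ((μ₁ * v₂ + μ₂ * v₁) / (v₁ + v₂)) (v₁ * v₂ / (v₁ + v₂)) x := by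
  have h₁' : (0 : ℝ) < v₁ := by positivity
  have h₂' : (0 : ℝ) < v₂ := by positivity
  have hsqrt : √(2 * π * v₁) * √(2 * π * v₂) =
      √(2 * π * (v₁ + v₂)) * √(2 * π * (v₁ * v₂ / (v₁ + v₂))) := by
    rw [← Real.sqrt_mul (by positivity), ← Real.sqrt_mul (by positivity)]
    congr 1
    field_simp
  have hexp : -(x - μ₁) ^ 2 / (2 * v₁) + -(x - μ₂) ^ 2 / (2 * v₂) =
      -(μ₂ - μ₁) ^ 2 / (2 * (v₁ + v₂)) +
        -(x - (μ₁ * v₂ + μ₂ * v₁) / (v₁ + v₂)) ^ 2 / (2 * (v₁ * v₂ / (v₁ + v₂))) := by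
    field_simp
    ring
  simp only [gaussianPDFReal, NNReal.coe_add, NNReal.coe_mul, NNReal.coe_div]
  calc _ = (√(2 * π * v₁) * √(2 * π * v₂))⁻¹ *
        rexp (-(x - μ₁) ^ 2 / (2 * v₁) + -(x - μ₂) ^ 2 / (2 * v₂)) := by
        rw [mul_inv, exp_add]; ring
    _ = _ := by rw [hsqrt, hexp, mul_inv, exp_add]; ring

lemma integral_gaussianPDFReal_mul_gaussianPDFReal {μ₁ μ₂ : ℝ} {v₁ v₂ : ℝ≥0} (h₁ : v₁ ≠ 0)
    (h₂ : v₂ ≠ 0) :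
    ∫ x, gaussianPDFReal μ₁ v₁ x * gaussianPDFReal μ₂ v₂ x = gaussianPDFReal μ₁ (v₁ + v₂) μ₂ := by
  simp_rw [gaussianPDFReal_mul_gaussianPDFReal_s10 h₁ h₂]
  rw [integral_const_mul, integral_gaussianPDFReal_eq_one _ (by positivity), mul_one]

lemma integral_sub_mul_ite_le_gaussianReal (hv : v ≠ 0) (t : ℝ) :
    ∫ y, (y - μ) * (if t ≤ y then 1 else 0) ∂gaussianReal μ v = v * gaussianPDFReal μ v t := by
  have h : (fun y => gaussianPDFReal μ v y • ((y - μ) * if t ≤ y then 1 else 0)) =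
      (Ici t).indicator fun y => (y - μ) * gaussianPDFReal μ v y := by
    ext y
    by_cases hy : t ≤ y <;> simp [hy, indicator, mul_comm]
  rw [integral_gaussianReal_eq_integral_smul hv, h, integral_indicator measurableSet_Ici,
    integral_Ici_sub_mul_gaussianPDFReal]

lemma integral_gaussianPDFReal_add_gaussianReal {b c : ℝ≥0} (hb : b ≠ 0) (hc : c ≠ 0) (x : ℝ) :
    ∫ z, gaussianPDFReal 0 b (x + z) ∂gaussianReal 0 c = gaussianPDFReal 0 (b + c) x := by
  simp_rw [integral_gaussianReal_eq_integral_smul hc, smul_eq_mul, add_comm x,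
    gaussianPDFReal_add, integral_gaussianPDFReal_mul_gaussianPDFReal hc hb]
  rw [zero_sub, gaussianPDFReal_neg, neg_zero, add_comm]

lemma integral_fst_mul_ite_nonneg_add_gaussianReal_prod {b c : ℝ≥0} (hb : b ≠ 0) (hc : c ≠ 0)
    (x : ℝ) :
    ∫ p : ℝ × ℝ, p.1 * (if 0 ≤ x + p.1 + p.2 then 1 else 0)
        ∂(gaussianReal 0 b).prod (gaussianReal 0 c) = b * gaussianPDFReal 0 (b + c) x := by
  have hint : Integrable (fun p : ℝ × ℝ => p.1 * if 0 ≤ x + p.1 + p.2 then 1 else 0)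
      ((gaussianReal 0 b).prod (gaussianReal 0 c)) :=
    (integrable_id_gaussianReal.comp_fst _).mul_ite_nonneg (by fun_prop)
  have hinner (z : ℝ) : ∫ y, y * (if 0 ≤ x + y + z then 1 else 0) ∂gaussianReal 0 b =
      b * gaussianPDFReal 0 b (x + z) := by
    have h := integral_sub_mul_ite_le_gaussianReal (μ := 0) hb (-(x + z))
    simp only [sub_zero, neg_le_iff_add_nonneg, gaussianPDFReal_neg, neg_zero] at h
    simpa only [show ∀ y, y + (x + z) = x + y + z from fun y => by ring] using h
  rw [integral_prod_symm _ hint]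
  simp_rw [hinner, integral_const_mul, integral_gaussianPDFReal_add_gaussianReal hb hc]

lemma integral_mul_ite_nonneg_mul_gaussianPDFReal_gaussianReal {a v : ℝ≥0} (ha : a ≠ 0)
    (hv : v ≠ 0) :
    ∫ x, x * (if 0 ≤ x then 1 else 0) * gaussianPDFReal 0 v x ∂gaussianReal 0 a =
      √(a * v) / (2 * π * (a + v)) := by
  have hσ : a * v / (a + v) ≠ 0 := by positivity
  have h (x : ℝ) : gaussianPDFReal 0 a x • (x * (if 0 ≤ x then 1 else 0) * gaussianPDFReal 0 v x)
      = gaussianPDFReal 0 (a + v) 0 *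
        (gaussianPDFReal 0 (a * v / (a + v)) x • ((x - 0) * if 0 ≤ x then 1 else 0)) := by
    rw [smul_eq_mul, smul_eq_mul, sub_zero, show ∀ p q r : ℝ, p * (x * r * q) = x * r * (p * q)
      by intros; ring, gaussianPDFReal_mul_gaussianPDFReal_s10 ha hv]
    simp only [zero_mul, add_zero, zero_div]
    ring
  simp_rw [integral_gaussianReal_eq_integral_smul ha, h, integral_const_mul,
    ← integral_gaussianReal_eq_integral_smul hσ, integral_sub_mul_ite_le_gaussianReal hσ]
  simp only [gaussianPDFReal_self]
  have hP : (0 : ℝ) < a * v := by positivity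
  have hsqrt : √(2 * π * (a + v)) * √(2 * π * (a * v / (a + v))) = 2 * π * √(a * v) := by
    rw [← Real.sqrt_mul (by positivity), show 2 * π * (a + v) * (2 * π * (a * v / (a + v))) =
      (2 * π) ^ 2 * (a * v) by field_simp, Real.sqrt_mul (by positivity),
      Real.sqrt_sq (by positivity)]
  push_cast
  calc _ = a * v / (a + v) / (√(2 * π * (a + v)) * √(2 * π * (a * v / (a + v)))) := by
        rw [div_eq_mul_inv _ (_ * _), mul_inv]; ring
    _ = √(a * v) * √(a * v) / (a + v) / (2 * π * √(a * v)) := by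
        rw [hsqrt, Real.mul_self_sqrt hP.le]
    _ = _ := by field_simp

end ProbabilityTheory

theorem gaussian_F5_moment (a b c : ℝ≥0) (ha : 0 < a) (hb : 0 < b) (hc : 0 < c) :
    ∫ q : ℝ × ℝ × ℝ,
        q.1 * q.2.1 * (if 0 ≤ q.1 then (1:ℝ) else 0) *
          (if 0 ≤ q.1 + q.2.1 + q.2.2 then (1:ℝ) else 0)
        ∂((gaussianReal 0 a).prod ((gaussianReal 0 b).prod (gaussianReal 0 c)))
      = (b : ℝ) * Real.sqrt ((a : ℝ) * ((b : ℝ) + (c : ℝ))) /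
          (2 * Real.pi * ((a : ℝ) + (b : ℝ) + (c : ℝ))) := by
  have hinner (x : ℝ) :
      ∫ p : ℝ × ℝ, x * p.1 * (if 0 ≤ x then (1:ℝ) else 0) * (if 0 ≤ x + p.1 + p.2 then 1 else 0)
        ∂(gaussianReal 0 b).prod (gaussianReal 0 c) =
      b * (x * (if 0 ≤ x then 1 else 0) * gaussianPDFReal 0 (b + c) x) := by
    calc _ = ∫ p : ℝ × ℝ, (x * if 0 ≤ x then 1 else 0) * (p.1 * if 0 ≤ x + p.1 + p.2 then 1 else 0)
          ∂(gaussianReal 0 b).prod (gaussianReal 0 c) := by congr 1; ext p; ring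
      _ = _ := by
        rw [integral_const_mul, integral_fst_mul_ite_nonneg_add_gaussianReal_prod hb.ne' hc.ne']
        ring
  rw [integral_prod]
  · simp_rw [hinner, integral_const_mul,
      integral_mul_ite_nonneg_mul_gaussianPDFReal_gaussianReal ha.ne' (add_pos hb hc).ne']
    push_cast
    ring
  · exact ((integrable_id_gaussianReal.mul_prod (integrable_id_gaussianReal.comp_fst _))
      |>.mul_ite_nonneg measurable_fst |>.mul_ite_nonneg (by fun_prop))
end

section
/- Let (x_t)_{t≥0} be a positive real sequence satisfying x_{t+1} = x_t + c₁·e^{−c₂·x_t} for all t ≥ 0, where c₁, c₂ > 0 are constants. Then for all natural numbers t, (1/c₂)·log(c₁c₂t + e^{c₂x₀}) ≤ x_t ≤ c₁·e^{−c₂x₀} + (1/c₂)·log(c₁c₂t + e^{c₂x₀}). -/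
/-!
With `y t = exp (c₂ * x t)` the recursion reads `y (t + 1) = y t * exp (c₁ c₂ / y t)`, and
`exp z ≥ 1 + z` gives `y (t + 1) ≥ y t + c₁ c₂`, hence `y t ≥ c₁ c₂ t + y 0`: the lower bound.
So the increment `x (t + 1) - x t = c₁ / y t` is at most `c₁ / (b + c₁ c₂)` with
`b = c₁ c₂ (t - 1) + y 0`, and `a / (b + a) ≤ log (b + a) - log b` bounds this by the increment of
`(1 / c₂) log (c₁ c₂ (t - 1) + y 0)`. Summing from `t = 1` leaves the first increment `c₁ / y 0`.
-/

open Real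

lemma Real.add_le_mul_exp_div {y : ℝ} (hy : 0 < y) (a : ℝ) : y + a ≤ y * exp (a / y) :=
  calc y + a = y * (a / y + 1) := by field_simp; ring
    _ ≤ y * exp (a / y) := mul_le_mul_of_nonneg_left (add_one_le_exp _) hy.le

lemma Real.div_add_le_log_add_sub_log {b a : ℝ} (hb : 0 < b) (hab : 0 < b + a) :
    a / (b + a) ≤ log (b + a) - log b := by
  have h := one_sub_inv_le_log_of_pos (div_pos hab hb)
  rw [log_div hab.ne' hb.ne', inv_div] at h
  calc a / (b + a) = 1 - b / (b + a) := by field_simp; ring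
    _ ≤ log (b + a) - log b := h

section ExpRecursion

variable {x : ℕ → ℝ} {c₁ c₂ : ℝ} (hrec : ∀ t, x (t + 1) = x t + c₁ * exp (-c₂ * x t))
include hrec

lemma exp_mul_succ_eq (t : ℕ) :
    exp (c₂ * x (t + 1)) = exp (c₂ * x t) * exp (c₁ * c₂ / exp (c₂ * x t)) := by
  rw [← exp_add, hrec, neg_mul, exp_neg]
  ring_nf

lemma exp_mul_add_le_exp_mul_succ (t : ℕ) :
    exp (c₂ * x t) + c₁ * c₂ ≤ exp (c₂ * x (t + 1)) :=
  exp_mul_succ_eq hrec t ▸ add_le_mul_exp_div (exp_pos _) _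

lemma linear_add_exp_le_exp_mul (t : ℕ) :
    c₁ * c₂ * t + exp (c₂ * x 0) ≤ exp (c₂ * x t) := by
  induction t with
  | zero => simp
  | succ n ih =>
    push_cast
    linarith [exp_mul_add_le_exp_mul_succ hrec n]

lemma log_linear_add_exp_le (hc₁ : 0 ≤ c₁) (hc₂ : 0 < c₂) (t : ℕ) :
    (1 / c₂) * log (c₁ * c₂ * t + exp (c₂ * x 0)) ≤ x t := by
  rw [one_div_mul_eq_div, div_le_iff₀' hc₂, log_le_iff_le_exp (by positivity)]
  exact linear_add_exp_le_exp_mul hrec t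

lemma mul_exp_neg_le_div (hc₁ : 0 ≤ c₁) (hc₂ : 0 < c₂) (t : ℕ) :
    c₁ * exp (-c₂ * x t) ≤ c₁ / (c₁ * c₂ * t + exp (c₂ * x 0)) := by
  rw [neg_mul, exp_neg, ← div_eq_mul_inv]
  exact div_le_div_of_nonneg_left hc₁ (by positivity) (linear_add_exp_le_exp_mul hrec t)

lemma succ_le_mul_exp_neg_add_log (hc₁ : 0 ≤ c₁) (hc₂ : 0 < c₂) (t : ℕ) :
    x (t + 1) ≤ c₁ * exp (-c₂ * x 0) + (1 / c₂) * log (c₁ * c₂ * t + exp (c₂ * x 0)) := by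
  induction t with
  | zero =>
    rw [hrec, Nat.cast_zero, mul_zero, zero_add, log_exp, one_div, inv_mul_cancel_left₀ hc₂.ne']
    linarith
  | succ n ih =>
    set b := c₁ * c₂ * n + exp (c₂ * x 0)
    have hb : 0 < b := by positivity
    have hsucc : c₁ * c₂ * ↑(n + 1) + exp (c₂ * x 0) = b + c₁ * c₂ := by push_cast; ring
    have hlog := div_add_le_log_add_sub_log hb (a := c₁ * c₂) (by positivity)
    calc x (n + 1 + 1) = x (n + 1) + c₁ * exp (-c₂ * x (n + 1)) := hrec _
      _ ≤ (c₁ * exp (-c₂ * x 0) + (1 / c₂) * log b) + c₁ / (b + c₁ * c₂) :=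
        add_le_add ih (hsucc ▸ mul_exp_neg_le_div hrec hc₁ hc₂ (n + 1))
      _ = c₁ * exp (-c₂ * x 0) + (1 / c₂) * (log b + c₁ * c₂ / (b + c₁ * c₂)) := by
        field_simp; ring
      _ ≤ c₁ * exp (-c₂ * x 0) + (1 / c₂) * log (b + c₁ * c₂) := by gcongr; linarith
      _ = _ := by rw [hsucc]

end ExpRecursion

theorem exp_sequence_bounds_general (x : ℕ → ℝ) (c₁ c₂ : ℝ) (hc₁ : 0 < c₁)
    (hc₂ : 0 < c₂)
    (hrec : ∀ t, x (t + 1) = x t + c₁ * Real.exp (-c₂ * x t)) :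
    ∀ t : ℕ,
      (1 / c₂) * Real.log (c₁ * c₂ * t + Real.exp (c₂ * x 0)) ≤ x t ∧
      x t ≤ c₁ * Real.exp (-c₂ * x 0) +
        (1 / c₂) * Real.log (c₁ * c₂ * t + Real.exp (c₂ * x 0)) := by
  intro t
  refine ⟨log_linear_add_exp_le hrec hc₁.le hc₂ t, ?_⟩
  cases t with
  | zero =>
    rw [Nat.cast_zero, mul_zero, zero_add, log_exp, one_div, inv_mul_cancel_left₀ hc₂.ne']
    linarith [mul_pos hc₁ (exp_pos (-c₂ * x 0))]
  | succ n =>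
    have hmono : log (c₁ * c₂ * n + exp (c₂ * x 0)) ≤ log (c₁ * c₂ * ↑(n + 1) + exp (c₂ * x 0)) :=
      log_le_log (by positivity) (by push_cast; nlinarith [mul_pos hc₁ hc₂])
    linarith [succ_le_mul_exp_neg_add_log hrec hc₁.le hc₂ n,
      mul_le_mul_of_nonneg_left hmono (one_div_pos.mpr hc₂).le]

theorem exp_sequence_bounds (x : ℕ → ℝ) (c₁ c₂ : ℝ) (hc₁ : 0 < c₁)
    (hc₂ : 0 < c₂) (hpos : ∀ t, 0 < x t)
    (hrec : ∀ t, x (t + 1) = x t + c₁ * Real.exp (-c₂ * x t)) :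
    ∀ t : ℕ,
      (1 / c₂) * Real.log (c₁ * c₂ * t + Real.exp (c₂ * x 0)) ≤ x t ∧
      x t ≤ c₁ * Real.exp (-c₂ * x 0) +
        (1 / c₂) * Real.log (c₁ * c₂ * t + Real.exp (c₂ * x 0)) :=
  exp_sequence_bounds_general x c₁ c₂ hc₁ hc₂ hrec
end
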